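/- arXiv:2407.15900 — 2 statements merged into one kernel-verified Lean document; each statement's English description precedes it below -/
import Mathlib

section
/- Let F be the standard logistic cumulative distribution function, F(x) = 1/(1 + e^{−x}). Then for every threshold τ ∈ ℝ and observation y ∈ ℝ, writing v = max(y, τ): twCRPS_τ(F, y) = F(τ) − 1 + log((1 − F(τ))/(1 − F(v))) − log F(v). -/
open MeasureTheory Set

/-- Threshold-weighted CRPS: `twCRPS_τ(F, y) = ∫_τ^∞ (F(z) − 𝟙{z ≥ y})² dz`. -/
noncomputable def twCRPS (F : ℝ → ℝ) (τ y : ℝ) : ℝ :=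
  ∫ z in Set.Ioi τ, (F z - if y ≤ z then (1 : ℝ) else 0) ^ 2

/-- Standard logistic CDF `F(x) = 1/(1 + e^{−x})`. -/
noncomputable def logisticCDF (x : ℝ) : ℝ := 1 / (1 + Real.exp (-x))

/-!
The logistic CDF solves `F' = F (1 - F)`, and for any such `F` with values in `(0, 1)` the
functions `-log (1 - F) - F` and `log F - F` are antiderivatives of `F²` and `(F - 1)²`.
Splitting `(τ, ∞)` at `v = max y τ`, the integrand of the twCRPS is `F²` on `(τ, v)` and
`(F - 1)²` on `(v, ∞)`, so both pieces are evaluated by the fundamental theorem of calculus,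
the second one using `F → 1` at `+∞`.
-/

open Filter Topology Real

lemma twCRPS_eq_intervalIntegral_add_integral_Ioi (F : ℝ → ℝ) (τ y : ℝ)
    (hmid : IntervalIntegrable (fun z => F z ^ 2) volume τ (max y τ))
    (htail : IntegrableOn (fun z => (F z - 1) ^ 2) (Ioi (max y τ))) :
    twCRPS F τ y = (∫ z in τ..max y τ, F z ^ 2) + ∫ z in Ioi (max y τ), (F z - 1) ^ 2 := by
  set v := max y τ
  set f := fun z => (F z - if y ≤ z then (1 : ℝ) else 0) ^ 2
  have hτv : τ ≤ v := le_max_right y τ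
  have hmid_eq : EqOn f (fun z => F z ^ 2) (Ioo τ v) := fun z hz => by
    have hzy : ¬ y ≤ z := fun hyz => (max_le hyz hz.1.le).not_gt hz.2
    simp only [f, if_neg hzy, sub_zero]
  have htail_eq : EqOn f (fun z => (F z - 1) ^ 2) (Ioi v) := fun z hz => by
    simp only [f, if_pos ((le_max_left y τ).trans hz.out.le)]
  have hmid' : IntegrableOn f (Ioc τ v) := by
    rw [integrableOn_Ioc_iff_integrableOn_Ioo]
    refine (integrableOn_congr_fun hmid_eq measurableSet_Ioo).2 ?_
    exact ((intervalIntegrable_iff_integrableOn_Ioc_of_le hτv).1 hmid).mono_set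
      Ioo_subset_Ioc_self
  have htail' : IntegrableOn f (Ioi v) := (integrableOn_congr_fun htail_eq measurableSet_Ioi).2 htail
  calc twCRPS F τ y = (∫ z in Ioc τ v, f z) + ∫ z in Ioi v, f z := by
        rw [twCRPS, ← Ioc_union_Ioi_eq_Ioi hτv,
          setIntegral_union (Ioc_disjoint_Ioi le_rfl) measurableSet_Ioi hmid' htail']
    _ = _ := by
        rw [intervalIntegral.integral_of_le hτv, integral_Ioc_eq_integral_Ioo,
          integral_Ioc_eq_integral_Ioo, setIntegral_congr_fun measurableSet_Ioo hmid_eq,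
          setIntegral_congr_fun measurableSet_Ioi htail_eq]

section LogisticEquation

variable {F : ℝ → ℝ}

lemma hasDerivAt_neg_log_one_sub_sub_self {x : ℝ} (hF : HasDerivAt F (F x * (1 - F x)) x)
    (hx : F x ≠ 1) : HasDerivAt (fun z => -log (1 - F z) - F z) (F x ^ 2) x := by
  have hx' : 1 - F x ≠ 0 := sub_ne_zero.2 hx.symm
  refine (((hF.const_sub 1).log hx').neg.sub hF).congr_deriv ?_
  field_simp
  ring

lemma hasDerivAt_log_sub_self {x : ℝ} (hF : HasDerivAt F (F x * (1 - F x)) x) (hx : F x ≠ 0) :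
    HasDerivAt (fun z => log (F z) - F z) ((F x - 1) ^ 2) x := by
  refine ((hF.log hx).sub hF).congr_deriv ?_
  field_simp
  ring

lemma integral_sq_eq_of_logistic (hF : ∀ x, HasDerivAt F (F x * (1 - F x)) x)
    (hlt : ∀ x, F x < 1) (a b : ℝ) :
    ∫ z in a..b, F z ^ 2 = F a - F b + log ((1 - F a) / (1 - F b)) := by
  have hcont : Continuous F := continuous_iff_continuousAt.2 fun x => (hF x).continuousAt
  rw [intervalIntegral.integral_eq_sub_of_hasDerivAt
      (fun x _ => hasDerivAt_neg_log_one_sub_sub_self (hF x) (hlt x).ne)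
      ((hcont.pow 2).intervalIntegrable a b),
    log_div (sub_pos.2 (hlt a)).ne' (sub_pos.2 (hlt b)).ne']
  ring

lemma tendsto_log_sub_self_of_tendsto_one (hlim : Tendsto F atTop (𝓝 1)) :
    Tendsto (fun z => log (F z) - F z) atTop (𝓝 (-1)) := by
  simpa using ((continuousAt_log one_ne_zero).tendsto.comp hlim).sub hlim

lemma integrableOn_Ioi_sub_one_sq_of_logistic (hF : ∀ x, HasDerivAt F (F x * (1 - F x)) x)
    (hpos : ∀ x, 0 < F x) (hlim : Tendsto F atTop (𝓝 1)) (a : ℝ) :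
    IntegrableOn (fun z => (F z - 1) ^ 2) (Ioi a) :=
  integrableOn_Ioi_deriv_of_nonneg' (fun x _ => hasDerivAt_log_sub_self (hF x) (hpos x).ne')
    (fun _ _ => sq_nonneg _) (tendsto_log_sub_self_of_tendsto_one hlim)

lemma integral_Ioi_sub_one_sq_eq_of_logistic (hF : ∀ x, HasDerivAt F (F x * (1 - F x)) x)
    (hpos : ∀ x, 0 < F x) (hlim : Tendsto F atTop (𝓝 1)) (a : ℝ) :
    ∫ z in Ioi a, (F z - 1) ^ 2 = F a - 1 - log (F a) := by
  rw [integral_Ioi_of_hasDerivAt_of_nonneg'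
    (fun x _ => hasDerivAt_log_sub_self (hF x) (hpos x).ne')
    (fun _ _ => sq_nonneg _) (tendsto_log_sub_self_of_tendsto_one hlim)]
  ring

theorem twCRPS_eq_of_logistic (hF : ∀ x, HasDerivAt F (F x * (1 - F x)) x)
    (hpos : ∀ x, 0 < F x) (hlt : ∀ x, F x < 1) (hlim : Tendsto F atTop (𝓝 1)) (τ y : ℝ) :
    twCRPS F τ y =
      F τ - 1 + log ((1 - F τ) / (1 - F (max y τ))) - log (F (max y τ)) := by
  have hcont : Continuous F := continuous_iff_continuousAt.2 fun x => (hF x).continuousAt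
  rw [twCRPS_eq_intervalIntegral_add_integral_Ioi F τ y ((hcont.pow 2).intervalIntegrable _ _)
      (integrableOn_Ioi_sub_one_sq_of_logistic hF hpos hlim _),
    integral_sq_eq_of_logistic hF hlt, integral_Ioi_sub_one_sq_eq_of_logistic hF hpos hlim]
  ring

end LogisticEquation

lemma logisticCDF_eq_sigmoid : logisticCDF = sigmoid := by
  ext x
  rw [logisticCDF, sigmoid_def, one_div]

theorem twCRPS_logistic (τ y : ℝ) :
    twCRPS logisticCDF τ y =
      logisticCDF τ - 1
        + Real.log ((1 - logisticCDF τ) / (1 - logisticCDF (max y τ)))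
        - Real.log (logisticCDF (max y τ)) := by
  rw [logisticCDF_eq_sigmoid]
  exact twCRPS_eq_of_logistic hasDerivAt_sigmoid sigmoid_pos sigmoid_lt_one
    tendsto_sigmoid_atTop τ y
end

section
/- Let μ ∈ ℝ and 0 < σ < 1, and let F_{μ,σ} denote the log-logistic cumulative distribution function, F_{μ,σ}(x) = 1/(1 + exp(−(log x − μ)/σ)) for x > 0 and F_{μ,σ}(x) = 0 for x ≤ 0. Define the upper incomplete beta function B_u(x; p, q) = ∫_x^1 t^{p−1}(1 − t)^{q−1} dt for 0 ≤ x ≤ 1. Then for every threshold τ ≥ 0 and observation y > 0, writing v = max(y, τ): twCRPS_τ(F_{μ,σ}, y) = −τ F_{μ,σ}(τ)² + v (2 F_{μ,σ}(v) − 1) + 2 e^{μ} (B_u(F_{μ,σ}(v); 1 + σ, 1 − σ) − B_u(F_{μ,σ}(τ); 2 + σ, 1 − σ)). -/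
/-!
On `(0, ∞)` the log-logistic CDF is `F z = sigmoid ((log z - μ) / σ)`, so
`F' = F (1 - F) / (σ z)` and `z = e^μ (F / (1 - F))^σ`. Together these give
`d/dz [e^μ B_u(F z; p, 1 - σ)] = -F^(p-σ) (1 - F) / σ`, hence explicit primitives of `F²` and
of `(1 - F)²`; the latter tends to `0` at `∞` because `z (1 - F)² = e^μ F^σ (1 - F)^(2-σ)`.
The score splits at `max y τ` into the integral of `F²` over `(τ, max y τ)` and that of
`(1 - F)²` over `(max y τ, ∞)`, both evaluated by the fundamental theorem of calculus.
-/

open MeasureTheory Set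

/-- Log-logistic CDF with log-location `μ` and log-scale `σ`:
`F_{μ,σ}(x) = 1/(1 + exp(−(log x − μ)/σ))` for `x > 0`, and `0` for `x ≤ 0`. -/
noncomputable def logLogisticCDF (μ σ : ℝ) (x : ℝ) : ℝ :=
  if 0 < x then 1 / (1 + Real.exp (-(Real.log x - μ) / σ)) else 0

/-- Upper incomplete beta function `B_u(x; p, q) = ∫_x^1 t^{p−1}(1 − t)^{q−1} dt`. -/
noncomputable def upperIncBeta (x p q : ℝ) : ℝ :=
  ∫ t in Set.Ioc x (1 : ℝ), t ^ (p - 1) * (1 - t) ^ (q - 1)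

open Filter Topology Real

theorem twCRPS_eq_of_hasDerivAt {F H G : ℝ → ℝ} {τ y : ℝ}
    (hF : ContinuousOn F (Icc τ (max y τ))) (hHc : ContinuousOn H (Icc τ (max y τ)))
    (hH : ∀ z ∈ Ioo τ (max y τ), HasDerivAt H (F z ^ 2) z)
    (hGc : ContinuousWithinAt G (Ici (max y τ)) (max y τ))
    (hG : ∀ z ∈ Ioi (max y τ), HasDerivAt G ((1 - F z) ^ 2) z)
    (hG_top : Tendsto G atTop (𝓝 0)) :
    twCRPS F τ y = H (max y τ) - H τ - G (max y τ) := by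
  set v := max y τ
  have hτv : τ ≤ v := le_max_right y τ
  have head : EqOn (fun z => (F z - if y ≤ z then (1 : ℝ) else 0) ^ 2) (fun z => F z ^ 2)
      (Ioo τ v) := fun z hz => by
    have hzy : ¬ y ≤ z := fun hyz => (lt_max_iff.1 hz.2).elim hyz.not_gt hz.1.not_gt
    simp only [if_neg hzy, sub_zero]
  have tail : EqOn (fun z => (F z - if y ≤ z then (1 : ℝ) else 0) ^ 2) (fun z => (1 - F z) ^ 2)
      (Ioi v) := fun z hz => by
    simp only [if_pos ((le_max_left y τ).trans (le_of_lt hz))]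
    ring
  have hHint : IntervalIntegrable (fun z => F z ^ 2) volume τ v :=
    (hF.pow 2).intervalIntegrable_of_Icc hτv
  have hGint : IntegrableOn (fun z => (1 - F z) ^ 2) (Ioi v) :=
    integrableOn_Ioi_deriv_of_nonneg hGc hG (fun _ _ => sq_nonneg _) hG_top
  have hheadInt : IntegrableOn (fun z => (F z - if y ≤ z then (1 : ℝ) else 0) ^ 2) (Ioc τ v) :=
    Iff.mpr integrableOn_Ioc_iff_integrableOn_Ioo
      ((hHint.1.mono_set Ioo_subset_Ioc_self).congr_fun head.symm measurableSet_Ioo)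
  rw [twCRPS, ← Ioc_union_Ioi_eq_Ioi hτv,
    setIntegral_union (Ioc_disjoint_Ioi le_rfl) measurableSet_Ioi hheadInt
      (hGint.congr_fun tail.symm measurableSet_Ioi),
    integral_Ioc_eq_integral_Ioo, setIntegral_congr_fun measurableSet_Ioo head,
    setIntegral_congr_fun measurableSet_Ioi tail, ← integral_Ioc_eq_integral_Ioo,
    ← intervalIntegral.integral_of_le hτv,
    intervalIntegral.integral_eq_sub_of_hasDerivAt_of_le hτv hHc hH hHint,
    integral_Ioi_of_hasDerivAt_of_nonneg hGc hG (fun _ _ => sq_nonneg _) hG_top]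
  ring

section UpperIncBeta

variable {p q x : ℝ}

theorem intervalIntegrable_rpow_mul_one_sub_rpow (hp : 1 ≤ p) (hq : 0 < q) :
    IntervalIntegrable (fun t : ℝ => t ^ (p - 1) * (1 - t) ^ (q - 1)) volume 0 1 := by
  have hdom : IntervalIntegrable (fun t : ℝ => (1 - t) ^ (q - 1)) volume 0 1 := by
    simpa using (intervalIntegral.intervalIntegrable_rpow' (a := 1) (b := 0)
      (show -1 < q - 1 by linarith)).comp_sub_left 1
  refine hdom.mono_fun (by fun_prop) ?_
  rw [uIoc_of_le zero_le_one]
  refine (ae_restrict_iff' measurableSet_Ioc).2 (ae_of_all _ fun t ht => ?_)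
  have h1t : 0 ≤ 1 - t := sub_nonneg.2 ht.2
  dsimp only
  rw [norm_mul, norm_of_nonneg (rpow_nonneg ht.1.le _), norm_of_nonneg (rpow_nonneg h1t _)]
  exact mul_le_of_le_one_left (rpow_nonneg h1t _) (rpow_le_one ht.1.le ht.2 (by linarith))

theorem upperIncBeta_eq_intervalIntegral (hx : x ≤ 1) :
    upperIncBeta x p q = ∫ t in x..1, t ^ (p - 1) * (1 - t) ^ (q - 1) :=
  (intervalIntegral.integral_of_le hx).symm

theorem upperIncBeta_one : upperIncBeta 1 p q = 0 := by
  simp [upperIncBeta]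

theorem continuousOn_upperIncBeta (hp : 1 ≤ p) (hq : 0 < q) :
    ContinuousOn (fun x => upperIncBeta x p q) (Icc 0 1) := by
  have h := intervalIntegral.continuousOn_primitive_interval_left
    (Iff.mp intervalIntegrable_iff' (intervalIntegrable_rpow_mul_one_sub_rpow hp hq))
  rw [uIcc_of_le zero_le_one] at h
  exact h.congr fun x hx => upperIncBeta_eq_intervalIntegral hx.2

theorem hasDerivAt_upperIncBeta (hp : 1 ≤ p) (hq : 0 < q) (hx : x ∈ Ioo 0 1) :
    HasDerivAt (fun x => upperIncBeta x p q) (-(x ^ (p - 1) * (1 - x) ^ (q - 1))) x := by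
  have hcont : ContinuousOn (fun t : ℝ => t ^ (p - 1) * (1 - t) ^ (q - 1)) (Iio 1) := by
    refine ((continuous_rpow_const (by linarith)).continuousOn).mul ?_
    exact ContinuousOn.rpow_const (by fun_prop)
      fun t ht => Or.inl (sub_ne_zero.2 (ne_of_lt ht).symm)
  have h := intervalIntegral.integral_hasDerivAt_left
    ((intervalIntegrable_rpow_mul_one_sub_rpow hp hq).mono_set (by
      rw [uIcc_of_le zero_le_one, uIcc_of_le hx.2.le]; exact Icc_subset_Icc_left hx.1.le))
    (hcont.stronglyMeasurableAtFilter isOpen_Iio x hx.2)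
    (hcont.continuousAt (Iio_mem_nhds hx.2))
  refine h.congr_of_eventuallyEq ?_
  filter_upwards [Iio_mem_nhds hx.2] with w hw using upperIncBeta_eq_intervalIntegral hw.le

end UpperIncBeta

namespace LogLogistic

variable {μ σ z : ℝ}

theorem logLogisticCDF_of_pos (hz : 0 < z) :
    logLogisticCDF μ σ z = sigmoid ((log z - μ) / σ) := by
  rw [logLogisticCDF, if_pos hz, sigmoid_def, one_div, neg_div]

theorem logLogisticCDF_of_nonpos (hz : z ≤ 0) : logLogisticCDF μ σ z = 0 :=
  if_neg hz.not_gt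

theorem logLogisticCDF_mem_Icc (μ σ z : ℝ) : logLogisticCDF μ σ z ∈ Icc 0 1 := by
  rcases lt_or_ge 0 z with hz | hz
  · rw [logLogisticCDF_of_pos hz]; exact ⟨sigmoid_nonneg _, sigmoid_le_one _⟩
  · rw [logLogisticCDF_of_nonpos hz]; exact ⟨le_rfl, zero_le_one⟩

theorem logLogisticCDF_mem_Ioo (hz : 0 < z) : logLogisticCDF μ σ z ∈ Ioo 0 1 := by
  rw [logLogisticCDF_of_pos hz]; exact ⟨sigmoid_pos _, sigmoid_lt_one _⟩

theorem hasDerivAt_logLogisticCDF (hz : 0 < z) :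
    HasDerivAt (logLogisticCDF μ σ)
      (logLogisticCDF μ σ z * (1 - logLogisticCDF μ σ z) / (σ * z)) z := by
  have h := (hasDerivAt_sigmoid _).comp z (((hasDerivAt_log hz.ne').sub_const μ).div_const σ)
  rw [← logLogisticCDF_of_pos hz] at h
  refine (h.congr_of_eventuallyEq ?_).congr_deriv (by ring)
  filter_upwards [eventually_gt_nhds hz] with w hw using logLogisticCDF_of_pos hw

theorem exp_mul_logLogisticCDF_rpow (hσ : σ ≠ 0) (hz : 0 < z) :
    exp μ * logLogisticCDF μ σ z ^ σ = z * (1 - logLogisticCDF μ σ z) ^ σ := by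
  have h := sigmoid_mul_rexp_neg ((log z - μ) / σ)
  rw [sigmoid_neg, ← logLogisticCDF_of_pos hz] at h
  rw [← h, mul_rpow (logLogisticCDF_mem_Icc μ σ z).1 (exp_pos _).le, ← exp_mul,
    neg_mul, div_mul_cancel₀ _ hσ, neg_sub, exp_sub, exp_log hz]
  field_simp

theorem continuousOn_logLogisticCDF (hσ : 0 < σ) :
    ContinuousOn (logLogisticCDF μ σ) (Ici 0) := by
  intro z hz
  rcases (mem_Ici.1 hz).eq_or_lt with rfl | hz
  · have hlim : Tendsto (fun w => (log w - μ) / σ) (𝓝[>] 0) atBot := by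
      simpa only [sub_eq_add_neg] using
        (tendsto_atBot_add_const_right _ (-μ) tendsto_log_nhdsGT_zero).atBot_div_const hσ
    have hright : Tendsto (logLogisticCDF μ σ) (𝓝[>] 0) (𝓝 (logLogisticCDF μ σ 0)) := by
      rw [logLogisticCDF_of_nonpos le_rfl]
      refine (tendsto_sigmoid_atBot.comp hlim).congr' ?_
      filter_upwards [self_mem_nhdsWithin] with w hw using (logLogisticCDF_of_pos hw).symm
    exact continuousWithinAt_Ioi_iff_Ici.1 hright
  · exact (hasDerivAt_logLogisticCDF hz).continuousAt.continuousWithinAt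

theorem tendsto_logLogisticCDF_atTop (hσ : 0 < σ) :
    Tendsto (logLogisticCDF μ σ) atTop (𝓝 1) := by
  have h : Tendsto (fun w => (log w - μ) / σ) atTop atTop := by
    simpa only [sub_eq_add_neg] using
      (tendsto_atTop_add_const_right _ (-μ) tendsto_log_atTop).atTop_div_const hσ
  refine (tendsto_sigmoid_atTop.comp h).congr' ?_
  filter_upwards [eventually_gt_atTop 0] with w hw using (logLogisticCDF_of_pos hw).symm

theorem tendsto_mul_one_sub_logLogisticCDF_sq_atTop (hσ0 : 0 < σ) (hσ2 : σ < 2) :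
    Tendsto (fun z => z * (1 - logLogisticCDF μ σ z) ^ 2) atTop (𝓝 0) := by
  have hF := tendsto_logLogisticCDF_atTop (μ := μ) hσ0
  have h1F : Tendsto (fun z => 1 - logLogisticCDF μ σ z) atTop (𝓝 0) := by
    simpa using hF.const_sub 1
  have h := ((hF.rpow_const (p := σ) (Or.inl one_ne_zero)).const_mul (exp μ)).mul
    (h1F.rpow_const (p := 2 - σ) (Or.inr (by linarith)))
  rw [one_rpow, zero_rpow (by linarith), mul_zero] at h
  refine h.congr' ?_
  filter_upwards [eventually_gt_atTop 0] with z hz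
  rw [exp_mul_logLogisticCDF_rpow hσ0.ne' hz, mul_assoc,
    ← rpow_add (sub_pos.2 (logLogisticCDF_mem_Ioo hz).2), add_sub_cancel, rpow_two]

theorem tendsto_upperIncBeta_logLogisticCDF_atTop {p q : ℝ} (hσ : 0 < σ) (hp : 1 ≤ p)
    (hq : 0 < q) : Tendsto (fun z => upperIncBeta (logLogisticCDF μ σ z) p q) atTop (𝓝 0) := by
  have hc := continuousOn_upperIncBeta hp hq 1 ⟨zero_le_one, le_rfl⟩
  rw [ContinuousWithinAt, upperIncBeta_one] at hc
  exact hc.comp (tendsto_nhdsWithin_iff.2 ⟨tendsto_logLogisticCDF_atTop hσ,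
    Eventually.of_forall fun z => logLogisticCDF_mem_Icc μ σ z⟩)

theorem hasDerivAt_exp_mul_upperIncBeta_logLogisticCDF {p : ℝ} (hσ0 : σ ≠ 0) (hσ1 : σ < 1)
    (hp : 1 ≤ p) (hz : 0 < z) :
    HasDerivAt (fun w => exp μ * upperIncBeta (logLogisticCDF μ σ w) p (1 - σ))
      (-(logLogisticCDF μ σ z ^ (p - σ) * (1 - logLogisticCDF μ σ z)) / σ) z := by
  obtain ⟨hF0, hF1⟩ := logLogisticCDF_mem_Ioo (μ := μ) (σ := σ) hz
  have h := ((hasDerivAt_upperIncBeta (q := 1 - σ) hp (by linarith) ⟨hF0, hF1⟩).comp z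
    (hasDerivAt_logLogisticCDF (μ := μ) (σ := σ) hz)).const_mul (exp μ)
  refine h.congr_deriv ?_
  have hE : exp μ = z * (1 - logLogisticCDF μ σ z) ^ σ / logLogisticCDF μ σ z ^ σ := by
    rw [eq_div_iff (rpow_pos_of_pos hF0 σ).ne', exp_mul_logLogisticCDF_rpow hσ0 hz]
  rw [show 1 - σ - 1 = -σ by ring, rpow_neg (sub_pos.2 hF1).le, rpow_sub_one hF0.ne',
    rpow_sub hF0, hE]
  have hFσ := rpow_pos_of_pos hF0 σ
  have h1Fσ := rpow_pos_of_pos (sub_pos.2 hF1) σ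
  field_simp

noncomputable def primitiveSq (μ σ z : ℝ) : ℝ :=
  z * logLogisticCDF μ σ z ^ 2 +
    2 * (exp μ * upperIncBeta (logLogisticCDF μ σ z) (2 + σ) (1 - σ))

noncomputable def primitiveOneSubSq (μ σ z : ℝ) : ℝ :=
  z * (1 - logLogisticCDF μ σ z) ^ 2 -
    2 * (exp μ * upperIncBeta (logLogisticCDF μ σ z) (1 + σ) (1 - σ) -
      exp μ * upperIncBeta (logLogisticCDF μ σ z) (2 + σ) (1 - σ))

theorem hasDerivAt_primitiveSq (hσ0 : 0 < σ) (hσ1 : σ < 1) (hz : 0 < z) :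
    HasDerivAt (primitiveSq μ σ) (logLogisticCDF μ σ z ^ 2) z := by
  have hF := hasDerivAt_logLogisticCDF (μ := μ) (σ := σ) hz
  have hB := hasDerivAt_exp_mul_upperIncBeta_logLogisticCDF (μ := μ) (p := 2 + σ) hσ0.ne' hσ1
    (by linarith) hz
  have h := ((hasDerivAt_id z).mul (hF.pow 2)).add (hB.const_mul 2)
  refine h.congr_deriv ?_
  rw [add_sub_cancel_right, rpow_two, id, Pi.pow_apply]
  field_simp
  ring

theorem hasDerivAt_primitiveOneSubSq (hσ0 : 0 < σ) (hσ1 : σ < 1) (hz : 0 < z) :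
    HasDerivAt (primitiveOneSubSq μ σ) ((1 - logLogisticCDF μ σ z) ^ 2) z := by
  have hF := hasDerivAt_logLogisticCDF (μ := μ) (σ := σ) hz
  have hB1 := hasDerivAt_exp_mul_upperIncBeta_logLogisticCDF (μ := μ) (p := 1 + σ) hσ0.ne' hσ1
    (by linarith) hz
  have hB2 := hasDerivAt_exp_mul_upperIncBeta_logLogisticCDF (μ := μ) (p := 2 + σ) hσ0.ne' hσ1
    (by linarith) hz
  have h := ((hasDerivAt_id z).mul ((hF.const_sub 1).pow 2)).sub ((hB1.sub hB2).const_mul 2)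
  refine h.congr_deriv ?_
  rw [add_sub_cancel_right, add_sub_cancel_right, rpow_one, rpow_two, id, Pi.pow_apply]
  field_simp
  ring

theorem continuousOn_primitiveSq (hσ0 : 0 < σ) (hσ1 : σ < 1) :
    ContinuousOn (primitiveSq μ σ) (Ici 0) := by
  have hF := continuousOn_logLogisticCDF (μ := μ) hσ0
  exact (continuousOn_id.mul (hF.pow 2)).add (continuousOn_const.mul (continuousOn_const.mul
    ((continuousOn_upperIncBeta (by linarith) (by linarith)).comp hF
      fun z _ => logLogisticCDF_mem_Icc μ σ z)))

theorem tendsto_primitiveOneSubSq_atTop (hσ0 : 0 < σ) (hσ1 : σ < 1) :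
    Tendsto (primitiveOneSubSq μ σ) atTop (𝓝 0) := by
  have hq : 0 < 1 - σ := by linarith
  have h1 := tendsto_upperIncBeta_logLogisticCDF_atTop (μ := μ) (p := 1 + σ) hσ0
    (by linarith) hq
  have h2 := tendsto_upperIncBeta_logLogisticCDF_atTop (μ := μ) (p := 2 + σ) hσ0
    (by linarith) hq
  have h := (tendsto_mul_one_sub_logLogisticCDF_sq_atTop (μ := μ) hσ0 (by linarith)).sub
    (((h1.const_mul (exp μ)).sub (h2.const_mul (exp μ))).const_mul 2)
  rw [mul_zero, sub_zero, mul_zero, sub_zero] at h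
  exact h

end LogLogistic

open LogLogistic

theorem twCRPS_logLogistic (μ σ : ℝ) (hσ0 : 0 < σ) (hσ1 : σ < 1)
    (τ y : ℝ) (hτ : 0 ≤ τ) (hy : 0 < y) :
    twCRPS (logLogisticCDF μ σ) τ y =
      -τ * (logLogisticCDF μ σ τ) ^ 2
        + max y τ * (2 * logLogisticCDF μ σ (max y τ) - 1)
        + 2 * Real.exp μ *
          (upperIncBeta (logLogisticCDF μ σ (max y τ)) (1 + σ) (1 - σ)
            - upperIncBeta (logLogisticCDF μ σ τ) (2 + σ) (1 - σ)) := by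
  have hv : 0 < max y τ := hy.trans_le (le_max_left y τ)
  have hIcc : Icc τ (max y τ) ⊆ Ici 0 := fun z hz => hτ.trans hz.1
  rw [twCRPS_eq_of_hasDerivAt ((continuousOn_logLogisticCDF hσ0).mono hIcc)
    ((continuousOn_primitiveSq hσ0 hσ1).mono hIcc)
    (fun z hz => hasDerivAt_primitiveSq hσ0 hσ1 (hτ.trans_lt hz.1))
    (hasDerivAt_primitiveOneSubSq hσ0 hσ1 hv).continuousAt.continuousWithinAt
    (fun z hz => hasDerivAt_primitiveOneSubSq hσ0 hσ1 (hv.trans hz))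
    (tendsto_primitiveOneSubSq_atTop hσ0 hσ1), primitiveSq, primitiveSq, primitiveOneSubSq]
  ring
end
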